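/- The numeral system a given by aₙ = λx₁…λxₙ.I has no Zero Test: there is no closed λ-term Z such that (Z a₀) ≃β T and (Z a_{n+1}) ≃β F for all n ∈ ℕ. -/

import Mathlib

/-- Untyped λ-terms in de Bruijn notation. -/
inductive Lam : Type
  | var : ℕ → Lam
  | app : Lam → Lam → Lam
  | lam : Lam → Lam
  deriving DecidableEq

namespace Lam

/-- Shift by one the free variables with index ≥ `d`. -/
def lift (d : ℕ) : Lam → Lam
  | var n => if n < d then var n else var (n + 1)
  | app M N => app (lift d M) (lift d N)
  | lam M => lam (lift (d + 1) M)

/-- Capture-avoiding substitution of `N` for the free variable of index `n`. -/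
def subst : Lam → ℕ → Lam → Lam
  | var m, n, N => if m = n then N else if n < m then var (m - 1) else var m
  | app M₁ M₂, n, N => app (subst M₁ n N) (subst M₂ n N)
  | lam M, n, N => lam (subst M (n + 1) (lift 0 N))

/-- One-step β-reduction (contraction of a β-redex anywhere in the term). -/
inductive Step : Lam → Lam → Prop
  | beta (M N : Lam) : Step (app (lam M) N) (subst M 0 N)
  | appL {M M' : Lam} (N : Lam) : Step M M' → Step (app M N) (app M' N)
  | appR (M : Lam) {N N' : Lam} : Step N N' → Step (app M N) (app M N')
  | lam {M M' : Lam} : Step M M' → Step (Lam.lam M) (Lam.lam M')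

/-- β-equivalence: the equivalence relation generated by one-step β-reduction. -/
def BetaEq : Lam → Lam → Prop := Relation.EqvGen Step

/-- The variable of index `n` occurs free in the term. -/
def HasFree : Lam → ℕ → Prop
  | var m, n => m = n
  | app M N, n => HasFree M n ∨ HasFree N n
  | lam M, n => HasFree M (n + 1)

/-- A term is closed if it has no free variables. -/
def Closed (M : Lam) : Prop := ∀ n, ¬ HasFree M n

/-- A term is β-normal: it contains no β-redex. -/
def IsBetaNormal : Lam → Prop
  | app (lam _) _ => False
  | app M N => IsBetaNormal M ∧ IsBetaNormal N
  | lam M => IsBetaNormal M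
  | var _ => True

/-- A term is βη-normal: it contains no β-redex and no η-redex
`λx.(M x)` with `x` not free in `M`. -/
def IsBetaEtaNormal : Lam → Prop
  | app (lam _) _ => False
  | app M N => IsBetaEtaNormal M ∧ IsBetaEtaNormal N
  | lam (app M (var 0)) => HasFree M 0 ∧ IsBetaEtaNormal (app M (var 0))
  | lam M => IsBetaEtaNormal M
  | var _ => True

/-- `I = λx.x`. -/
def I : Lam := lam (var 0)

/-- `T = λxλy.x`. -/
def T : Lam := lam (lam (var 1))

/-- `F = λxλy.y`. -/
def F : Lam := lam (lam (var 0))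

/-- The pair `<M,N> = λx.(x M N)` (the binder shifts the free variables of `M,N`). -/
def pair (M N : Lam) : Lam := lam (app (app (var 0) (lift 0 M)) (lift 0 N))

end Lam

/-- The numeral system `a` : `aₙ = λx₁…λxₙ.I` (so `a₀ = I`). -/
def Lam.sysA : ℕ → Lam
  | 0 => Lam.I
  | n + 1 => Lam.lam (Lam.sysA n)

/-!
Suppose `Z` were a zero test. By Church–Rosser `Z a₀ ↠β T`, and by standardization this
reduction can be taken standard: a weak head reduction to a head shape, followed recursively by
standard reductions of the immediate subterms. Write `Z a₀ = W[x := a₀]` with `W = Z x` and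
follow the standard reduction through this substitution. As long as `x` is not in head position,
every weak head step of `W[x := a₀]` is the image of a step of `W`, hence also a step of
`W[x := aₙ]` for every `n`. If `T` (which has no application) is reached this way, then
`Z a₁ ↠β T`, although `Z a₁ ≃β F` and `T`, `F` are distinct normal forms. Otherwise `x` gets
applied to `t` arguments under `s` abstractions; since `a_{m+1} N → a_m`, this gives
`Z a_{t+k} ↠β a_{s+k}` for all `k`, and `k = 2` yields the distinct normal forms
`a_{s+2} ≃β a₁ = F`.
-/

namespace Lam

theorem lift_lift (M : Lam) {i j : ℕ} (h : i ≤ j) :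
    lift i (lift j M) = lift (j + 1) (lift i M) := by
  induction M generalizing i j with
  | var n => simp only [lift]; split_ifs <;> simp only [lift] <;> grind
  | app M N ihM ihN => simp only [lift, ihM h, ihN h]
  | lam M ih => simp only [lift, ih (Nat.succ_le_succ h)]

theorem lift_subst_of_le (M N : Lam) {i j : ℕ} (h : j ≤ i) :
    lift i (subst M j N) = subst (lift (i + 1) M) j (lift i N) := by
  induction M generalizing i j N with
  | var n => simp only [lift, subst]; split_ifs <;> simp only [lift, subst] <;> grind
  | app M₁ M₂ ih₁ ih₂ => simp only [lift, subst, ih₁ _ h, ih₂ _ h]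
  | lam M ih => simp only [lift, subst, ih _ (Nat.succ_le_succ h), lift_lift N (Nat.zero_le i)]

theorem lift_subst_of_ge (M N : Lam) {i j : ℕ} (h : i ≤ j) :
    lift i (subst M j N) = subst (lift i M) (j + 1) (lift i N) := by
  induction M generalizing i j N with
  | var n => simp only [lift, subst]; split_ifs <;> simp only [lift, subst] <;> grind
  | app M₁ M₂ ih₁ ih₂ => simp only [lift, subst, ih₁ _ h, ih₂ _ h]
  | lam M ih => simp only [lift, subst, ih _ (Nat.succ_le_succ h), lift_lift N (Nat.zero_le i)]

theorem subst_lift (M N : Lam) (i : ℕ) : subst (lift i M) i N = M := by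
  induction M generalizing i N with
  | var n => simp only [lift]; split_ifs <;> simp only [subst] <;> grind
  | app M₁ M₂ ih₁ ih₂ => simp only [lift, subst, ih₁, ih₂]
  | lam M ih => simp only [lift, subst, ih]

theorem subst_subst (M N P : Lam) {i j : ℕ} (h : i ≤ j) :
    subst (subst M i N) j P = subst (subst M (j + 1) (lift i P)) i (subst N j P) := by
  induction M generalizing N P i j with
  | var n =>
      simp only [subst]
      split_ifs <;> simp only [subst, subst_lift] <;> grind
  | app M₁ M₂ ih₁ ih₂ => simp only [subst, ih₁ _ _ h, ih₂ _ _ h]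
  | lam M ih =>
      simp only [subst, ih _ _ (Nat.succ_le_succ h), lift_lift P (Nat.zero_le i),
        lift_subst_of_ge N P (Nat.zero_le j)]

theorem lift_eq_self_of_hasFree_lt {M : Lam} {d : ℕ} (h : ∀ k, HasFree M k → k < d) :
    lift d M = M := by
  induction M generalizing d with
  | var n => simp [lift, h n rfl]
  | app M N ihM ihN =>
      rw [lift, ihM fun k hk => h k (Or.inl hk), ihN fun k hk => h k (Or.inr hk)]
  | lam M ih =>
      rw [lift, ih fun | 0, _ => Nat.zero_lt_succ d | k + 1, hk => Nat.succ_lt_succ (h k hk)]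

theorem subst_eq_self_of_hasFree_lt {M : Lam} {d : ℕ} (h : ∀ k, HasFree M k → k < d) (N : Lam) :
    subst M d N = M := by
  induction M generalizing d N with
  | var n => have := h n rfl; simp only [subst]; split_ifs <;> grind
  | app M₁ M₂ ih₁ ih₂ =>
      rw [subst, ih₁ (fun k hk => h k (Or.inl hk)), ih₂ fun k hk => h k (Or.inr hk)]
  | lam M ih =>
      rw [subst, ih fun | 0, _ => Nat.zero_lt_succ d | k + 1, hk => Nat.succ_lt_succ (h k hk)]

theorem Closed.lift_eq {M : Lam} (h : Closed M) (d : ℕ) : lift d M = M :=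
  lift_eq_self_of_hasFree_lt fun k hk => absurd hk (h k)

theorem Closed.subst_eq {M : Lam} (h : Closed M) (d : ℕ) (N : Lam) : subst M d N = M :=
  subst_eq_self_of_hasFree_lt (fun k hk => absurd hk (h k)) N

theorem closed_sysA : ∀ n, Closed (sysA n)
  | 0, k, hk => Nat.succ_ne_zero k hk.symm
  | n + 1, k, hk => closed_sysA n (k + 1) hk

theorem sysA_injective : Function.Injective sysA := by
  intro m n h
  induction m generalizing n with
  | zero => cases n with
    | zero => rfl
    | succ n => cases n <;> simp [sysA, I] at h
  | succ m ih => cases n with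
    | zero => cases m <;> simp [sysA, I] at h
    | succ n => exact congrArg _ (ih (Lam.lam.inj h))

infix:50 " ↠β " => Relation.ReflTransGen Lam.Step

theorem steps_app {M M' N N' : Lam} (hM : M ↠β M') (hN : N ↠β N') : app M N ↠β app M' N' :=
  (Relation.ReflTransGen.lift (app · N) (fun _ _ => Step.appL N) _ _ hM).trans
    (Relation.ReflTransGen.lift (app M') (fun _ _ => Step.appR M') _ _ hN)

theorem steps_lam {M M' : Lam} (h : M ↠β M') : lam M ↠β lam M' :=
  Relation.ReflTransGen.lift lam (fun _ _ => Step.lam) _ _ h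

theorem BetaEq.equivalence : Equivalence BetaEq := Relation.EqvGen.is_equivalence Step

theorem BetaEq.of_steps {M N : Lam} (h : M ↠β N) : BetaEq M N :=
  Relation.reflTransGen_le_of_equivalence_of_le BetaEq.equivalence
    Relation.EqvGen.rel _ _ h

inductive Par : Lam → Lam → Prop
  | var (n : ℕ) : Par (var n) (var n)
  | lam {M M' : Lam} : Par M M' → Par (lam M) (lam M')
  | app {M M' N N' : Lam} : Par M M' → Par N N' → Par (app M N) (app M' N')
  | beta {M M' N N' : Lam} : Par M M' → Par N N' → Par (app (lam M) N) (subst M' 0 N')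

namespace Par

theorem refl : ∀ M : Lam, Par M M
  | .var n => .var n
  | .app M N => .app (refl M) (refl N)
  | .lam M => .lam (refl M)

theorem of_step {M N : Lam} (h : Step M N) : Par M N := by
  induction h with
  | beta M N => exact .beta (refl M) (refl N)
  | appL N _ ih => exact .app ih (refl N)
  | appR M _ ih => exact .app (refl M) ih
  | lam _ ih => exact .lam ih

theorem steps {M N : Lam} (h : Par M N) : M ↠β N := by
  induction h with
  | var n => exact .refl
  | lam _ ih => exact steps_lam ih
  | app _ _ ihM ihN => exact steps_app ihM ihN
  | beta _ _ ihM ihN => exact (steps_app (steps_lam ihM) ihN).tail (.beta _ _)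

theorem lift {M N : Lam} (h : Par M N) (d : ℕ) : Par (Lam.lift d M) (Lam.lift d N) := by
  induction h generalizing d with
  | var n => exact refl _
  | lam _ ih => exact .lam (ih (d + 1))
  | app _ _ ihM ihN => exact .app (ihM d) (ihN d)
  | beta _ _ ihM ihN =>
      rw [Lam.lift, Lam.lift, lift_subst_of_le _ _ (Nat.zero_le d)]
      exact .beta (ihM (d + 1)) (ihN d)

theorem subst {M M' N N' : Lam} (h : Par M M') (h' : Par N N') (k : ℕ) :
    Par (Lam.subst M k N) (Lam.subst M' k N') := by
  induction h generalizing N N' k with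
  | var n => simp only [Lam.subst]; split_ifs <;> first | exact h' | exact refl _
  | lam _ ih => exact .lam (ih (h'.lift 0) (k + 1))
  | app _ _ ihM ihN => exact .app (ihM h' k) (ihN h' k)
  | beta _ _ ihM ihN =>
      rw [Lam.subst, Lam.subst, subst_subst _ _ _ (Nat.zero_le k)]
      exact .beta (ihM (h'.lift 0) (k + 1)) (ihN h' k)

end Par

/-- Takahashi's complete development. -/
def develop : Lam → Lam
  | var n => var n
  | lam M => lam (develop M)
  | app (lam M) N => subst (develop M) 0 (develop N)
  | app M N => app (develop M) (develop N)

theorem Par.par_develop {M N : Lam} (h : Par M N) : Par N (develop M) := by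
  induction h with
  | var n => exact .var n
  | lam _ ih => exact .lam ih
  | @app M M' N N' hM _ ihM ihN =>
      cases hM with
      | var n => exact .app (.var n) ihN
      | lam _ => cases ihM with | lam ihM => exact .beta ihM ihN
      | app _ _ => exact .app ihM ihN
      | beta _ _ => exact .app ihM ihN
  | beta _ _ ihM ihN => exact ihM.subst ihN 0

theorem BetaEq.exists_steps {M N : Lam} (h : BetaEq M N) : ∃ P, M ↠β P ∧ N ↠β P := by
  have hjoin : Relation.Join (Relation.ReflTransGen Par) M N :=
    (Relation.equivalence_join_reflTransGen fun M _ _ h₁ h₂ =>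
      ⟨develop M, .single h₁.par_develop, .single h₂.par_develop⟩).eqvGen_iff.mp
      (h.mono fun _ N hs => ⟨N, .single (Par.of_step hs), .refl⟩)
  obtain ⟨P, hM, hN⟩ := hjoin
  have hsteps := Relation.reflTransGen_closed fun _ _ (h : Par _ _) => h.steps
  exact ⟨P, hsteps _ _ hM, hsteps _ _ hN⟩

theorem IsBetaNormal.app {M N : Lam} (h : IsBetaNormal (app M N)) :
    IsBetaNormal M ∧ IsBetaNormal N := by
  cases M <;> simp_all [IsBetaNormal]

theorem IsBetaNormal.not_step {M N : Lam} (hM : IsBetaNormal M) : ¬ Step M N := by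
  intro h
  induction h with
  | beta => exact hM
  | appL _ _ ih => exact ih hM.app.1
  | appR _ _ ih => exact ih hM.app.2
  | lam _ ih => exact ih hM

theorem IsBetaNormal.eq_of_steps {M N : Lam} (hM : IsBetaNormal M) (h : M ↠β N) : N = M := by
  rcases h.cases_head with rfl | ⟨_, hs, _⟩
  · rfl
  · exact absurd hs hM.not_step

theorem IsBetaNormal.eq_of_betaEq {M N : Lam} (hM : IsBetaNormal M) (hN : IsBetaNormal N)
    (h : BetaEq M N) : M = N := by
  obtain ⟨P, hMP, hNP⟩ := h.exists_steps
  rw [← hM.eq_of_steps hMP, hN.eq_of_steps hNP]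

theorem IsBetaNormal.steps_of_betaEq {M N : Lam} (hN : IsBetaNormal N) (h : BetaEq M N) :
    M ↠β N := by
  obtain ⟨P, hMP, hNP⟩ := h.exists_steps
  rwa [hN.eq_of_steps hNP] at hMP

theorem isBetaNormal_sysA : ∀ n, IsBetaNormal (sysA n)
  | 0 => trivial
  | n + 1 => isBetaNormal_sysA n

theorem isBetaNormal_T : IsBetaNormal T := trivial

inductive WHStep : Lam → Lam → Prop
  | beta (M N : Lam) : WHStep (app (lam M) N) (subst M 0 N)
  | app {M M' : Lam} (N : Lam) : WHStep M M' → WHStep (app M N) (app M' N)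

infix:50 " ↠ₕ " => Relation.ReflTransGen Lam.WHStep

namespace WHStep

theorem step {M N : Lam} (h : WHStep M N) : Step M N := by
  induction h with
  | beta M N => exact .beta M N
  | app N _ ih => exact .appL N ih

theorem lift {M N : Lam} (h : WHStep M N) (d : ℕ) : WHStep (Lam.lift d M) (Lam.lift d N) := by
  induction h generalizing d with
  | beta M N =>
      rw [Lam.lift, Lam.lift, lift_subst_of_le M N (Nat.zero_le d)]
      exact .beta _ _
  | app N _ ih => exact .app _ (ih d)

theorem subst {M N : Lam} (h : WHStep M N) (k : ℕ) (C : Lam) :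
    WHStep (Lam.subst M k C) (Lam.subst N k C) := by
  induction h generalizing k C with
  | beta M N =>
      rw [Lam.subst, Lam.subst, subst_subst M N C (Nat.zero_le k)]
      exact .beta _ _
  | app N _ ih => exact .app _ (ih k C)

end WHStep

theorem whSteps_lift {M N : Lam} (h : M ↠ₕ N) (d : ℕ) : lift d M ↠ₕ lift d N :=
  Relation.ReflTransGen.lift (lift d) (fun _ _ hs => hs.lift d) _ _ h

theorem whSteps_subst {M N : Lam} (h : M ↠ₕ N) (k : ℕ) (C : Lam) :
    subst M k C ↠ₕ subst N k C :=
  Relation.ReflTransGen.lift (subst · k C) (fun _ _ hs => hs.subst k C) _ _ h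

theorem whSteps_app_left {M M' : Lam} (N : Lam) (h : M ↠ₕ M') : app M N ↠ₕ app M' N :=
  Relation.ReflTransGen.lift (app · N) (fun _ _ => WHStep.app N) _ _ h

/-- Kashima's inductive characterisation of standard reduction. -/
inductive StdRed : Lam → Lam → Prop
  | var {M : Lam} (n : ℕ) : M ↠ₕ var n → StdRed M (var n)
  | lam {M P P' : Lam} : M ↠ₕ lam P → StdRed P P' → StdRed M (lam P')
  | app {M P P' Q Q' : Lam} : M ↠ₕ app P Q → StdRed P P' → StdRed Q Q' → StdRed M (app P' Q')

namespace StdRed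

theorem whSteps_left {M M' N : Lam} (h : M ↠ₕ M') (h' : StdRed M' N) : StdRed M N := by
  cases h' with
  | var n h₂ => exact .var n (h.trans h₂)
  | lam h₂ h₃ => exact .lam (h.trans h₂) h₃
  | app h₂ h₃ h₄ => exact .app (h.trans h₂) h₃ h₄

theorem refl : ∀ M : Lam, StdRed M M
  | .var n => .var n .refl
  | .app M N => .app .refl (refl M) (refl N)
  | .lam M => .lam .refl (refl M)

theorem lift {M N : Lam} (h : StdRed M N) (d : ℕ) : StdRed (Lam.lift d M) (Lam.lift d N) := by
  induction h generalizing d with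
  | var n h =>
      have h := whSteps_lift h d
      rw [Lam.lift] at h ⊢
      split_ifs at h ⊢ <;> exact .var _ h
  | lam h _ ih => exact .lam (whSteps_lift h d) (ih (d + 1))
  | app h _ _ ihP ihQ => exact .app (whSteps_lift h d) (ihP d) (ihQ d)

theorem subst {M N P Q : Lam} (h : StdRed M N) (h' : StdRed P Q) (k : ℕ) :
    StdRed (Lam.subst M k P) (Lam.subst N k Q) := by
  induction h generalizing P Q k with
  | @var M n h =>
      refine whSteps_left (whSteps_subst h k P) ?_
      simp only [Lam.subst]
      split_ifs
      exacts [h', refl _, refl _]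
  | lam h _ ih => exact .lam (whSteps_subst h k P) (ih (h'.lift 0) (k + 1))
  | app h _ _ ihP ihQ => exact .app (whSteps_subst h k P) (ihP h' k) (ihQ h' k)

theorem tail {M N N' : Lam} (h : StdRed M N) (h' : Step N N') : StdRed M N' := by
  induction h' generalizing M with
  | beta =>
      cases h with
      | app hM hL harg =>
        cases hL with
        | lam hP hbody =>
          exact whSteps_left (hM.trans ((whSteps_app_left _ hP).tail (.beta _ _)))
            (hbody.subst harg 0)
  | appL _ _ ih => cases h with | app hM hP hQ => exact .app hM (ih hP) hQ
  | appR _ _ ih => cases h with | app hM hP hQ => exact .app hM hP (ih hQ)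
  | lam _ ih => cases h with | lam hM hP => exact .lam hM (ih hP)

end StdRed

theorem stdRed_of_steps {M N : Lam} (h : M ↠β N) : StdRed M N := by
  induction h with
  | refl => exact .refl M
  | tail _ hs ih => exact ih.tail hs

theorem sysA_succ_app_step (n : ℕ) (N : Lam) : Step (app (sysA (n + 1)) N) (sysA n) :=
  (closed_sysA n).subst_eq 0 N ▸ Step.beta (sysA n) N

theorem subst_lam_sysA (M : Lam) (d n : ℕ) :
    subst (lam M) d (sysA n) = lam (subst M (d + 1) (sysA n)) := by
  rw [subst, (closed_sysA n).lift_eq]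

theorem subst_sysA_eq_var {W : Lam} {d n : ℕ} (h : subst W d (sysA 0) = var n) (m : ℕ) :
    subst W d (sysA m) = var n := by
  cases W with
  | var j =>
      by_cases hj : j = d
      · simp [subst, hj, sysA, I] at h
      · simpa [subst, hj] using h
  | app => cases h
  | lam W => rw [subst_lam_sysA] at h; cases h

theorem eq_var_or_lam_of_subst_sysA_zero_eq_lam {W P : Lam} {d : ℕ}
    (h : subst W d (sysA 0) = lam P) :
    W = var d ∨ ∃ W₁, W = lam W₁ ∧ P = subst W₁ (d + 1) (sysA 0) := by
  cases W with
  | var j =>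
      by_cases hj : j = d
      · exact .inl (congrArg var hj)
      · simp only [subst, if_neg hj] at h
        split_ifs at h
  | app => cases h
  | lam W₁ => rw [subst_lam_sysA] at h; exact .inr ⟨W₁, rfl, (lam.inj h).symm⟩

def CollapsesToNumeral (W : Lam) (d : ℕ) : Prop :=
  ∃ t s, ∀ k, subst W d (sysA (t + k)) ↠β sysA (s + k)

namespace CollapsesToNumeral

protected theorem var (d : ℕ) : CollapsesToNumeral (var d) d :=
  ⟨0, 0, fun k => by rw [subst, if_pos rfl, Nat.zero_add]⟩

protected theorem app {W : Lam} {d : ℕ} (h : CollapsesToNumeral W d) (N : Lam) :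
    CollapsesToNumeral (app W N) d := by
  obtain ⟨t, s, h⟩ := h
  refine ⟨t + 1, s, fun k => ?_⟩
  rw [Nat.add_right_comm]
  exact (steps_app (h (k + 1)) .refl).tail (sysA_succ_app_step (s + k) _)

protected theorem lam {W : Lam} {d : ℕ} (h : CollapsesToNumeral W (d + 1)) :
    CollapsesToNumeral (lam W) d := by
  obtain ⟨t, s, h⟩ := h
  refine ⟨t, s + 1, fun k => ?_⟩
  rw [subst_lam_sysA, Nat.add_right_comm]
  exact steps_lam (h k)

theorem of_steps {W W' : Lam} {d : ℕ} (hW : ∀ n, subst W d (sysA n) ↠β subst W' d (sysA n))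
    (h : CollapsesToNumeral W' d) : CollapsesToNumeral W d :=
  let ⟨t, s, h⟩ := h
  ⟨t, s, fun k => (hW _).trans (h k)⟩

end CollapsesToNumeral

theorem whStep_subst_sysA_zero {W Y : Lam} {d : ℕ} (h : WHStep (subst W d (sysA 0)) Y) :
    (∃ W', Y = subst W' d (sysA 0) ∧ ∀ n, WHStep (subst W d (sysA n)) (subst W' d (sysA n))) ∨
      CollapsesToNumeral W d := by
  induction W generalizing Y with
  | var j => simp only [subst] at h; split_ifs at h <;> cases h
  | lam W => rw [subst_lam_sysA] at h; cases h
  | app W₁ W₂ ih₁ _ =>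
      rw [subst] at h
      generalize hX : subst W₁ d (sysA 0) = X at h
      cases h with
      | beta P _ =>
          rcases eq_var_or_lam_of_subst_sysA_zero_eq_lam hX with rfl | ⟨W₁, rfl, rfl⟩
          · exact .inr ((CollapsesToNumeral.var d).app W₂)
          · refine .inl ⟨subst W₁ 0 W₂, ?_, fun n => (WHStep.beta W₁ W₂).subst d (sysA n)⟩
            rw [subst_subst W₁ W₂ _ (Nat.zero_le d), (closed_sysA 0).lift_eq]
      | app _ hs =>
          subst hX
          rcases ih₁ hs with ⟨W', rfl, hW'⟩ | hcol
          · exact .inl ⟨app W' W₂, rfl, fun n => .app _ (hW' n)⟩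
          · exact .inr (hcol.app W₂)

theorem whSteps_subst_sysA_zero {W X : Lam} {d : ℕ} (h : subst W d (sysA 0) ↠ₕ X) :
    (∃ W', X = subst W' d (sysA 0) ∧ ∀ n, subst W d (sysA n) ↠β subst W' d (sysA n)) ∨
      CollapsesToNumeral W d := by
  generalize hM : subst W d (sysA 0) = M at h
  induction h using Relation.ReflTransGen.head_induction_on generalizing W with
  | refl => exact .inl ⟨W, hM.symm, fun _ => .refl⟩
  | head hs _ ih =>
      subst hM
      rcases whStep_subst_sysA_zero hs with ⟨W₁, rfl, hW₁⟩ | hcol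
      · rcases ih rfl with ⟨W', rfl, hW'⟩ | hcol
        · exact .inl ⟨W', rfl, fun n => .head (hW₁ n).step (hW' n)⟩
        · exact .inr (hcol.of_steps fun n => .single (hW₁ n).step)
      · exact .inr hcol

def AppFree : Lam → Prop
  | var _ => True
  | app _ _ => False
  | lam M => AppFree M

theorem stdRed_subst_sysA_zero {W V : Lam} {d : ℕ} (h : StdRed (subst W d (sysA 0)) V)
    (hV : AppFree V) : (∀ n, subst W d (sysA n) ↠β V) ∨ CollapsesToNumeral W d := by
  generalize hM : subst W d (sysA 0) = M at h
  induction h generalizing W d with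
  | var n h =>
      subst hM
      rcases whSteps_subst_sysA_zero h with ⟨W', hW', hsteps⟩ | hcol
      · exact .inl fun m => subst_sysA_eq_var hW'.symm m ▸ hsteps m
      · exact .inr hcol
  | lam h _ ih =>
      subst hM
      rcases whSteps_subst_sysA_zero h with ⟨W', hW', hsteps⟩ | hcol
      · rcases eq_var_or_lam_of_subst_sysA_zero_eq_lam hW'.symm with rfl | ⟨W₁, rfl, hP⟩
        · exact .inr ((CollapsesToNumeral.var d).of_steps hsteps)
        · rcases ih hV hP.symm with hall | hcol
          · exact .inl fun n => (hsteps n).trans (subst_lam_sysA W₁ d n ▸ steps_lam (hall n))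
          · exact .inr (hcol.lam.of_steps hsteps)
      · exact .inr hcol
  | app => exact hV.elim

end Lam

/-- The numeral system `a` (`aₙ = λx₁…λxₙ.I`) has no Zero Test : there is no closed
λ-term `Z` with `(Z a₀) ≃β T` and `(Z a_{n+1}) ≃β F` for all `n`. -/
theorem statement2 :
    ¬ ∃ Z, Lam.Closed Z ∧ Lam.BetaEq (Lam.app Z (Lam.sysA 0)) Lam.T ∧
        ∀ n, Lam.BetaEq (Lam.app Z (Lam.sysA (n + 1))) Lam.F := by
  open Lam in
  rintro ⟨Z, hZ, h0, hF⟩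
  have hZa : ∀ n, subst (app Z (var 0)) 0 (sysA n) = app Z (sysA n) := fun n => by
    rw [subst, hZ.subst_eq, subst, if_pos rfl]
  have hnf : ∀ {n M}, app Z (sysA (n + 1)) ↠β M → IsBetaNormal M → M = sysA 1 := fun hM hM' =>
    hM'.eq_of_betaEq (isBetaNormal_sysA 1)
      (BetaEq.equivalence.trans (BetaEq.equivalence.symm (.of_steps hM)) (hF _))
  have hT : StdRed (subst (app Z (var 0)) 0 (sysA 0)) T :=
    hZa 0 ▸ stdRed_of_steps (isBetaNormal_T.steps_of_betaEq h0)
  rcases stdRed_subst_sysA_zero hT trivial with hall | ⟨t, s, hcol⟩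
  · exact absurd (hnf (n := 0) (hZa 1 ▸ hall 1) isBetaNormal_T) (by decide)
  · exact absurd (sysA_injective (hnf (n := t + 1) (hZa _ ▸ hcol 2) (isBetaNormal_sysA _)))
      (by omega)
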